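/- arXiv:1904.12951 — 4 statements merged into one kernel-verified Lean document; each statement's English description precedes it below -/
import Mathlib

section
/- Let φ : G₀ → G₁ be a homomorphism of topological groups which is also a Serre fibration, let pᵢ : Eᵢ → Eᵢ/Gᵢ be principal Gᵢ-bundles, and let ψ : E₀ → E₁ be a φ-equivariant Serre fibration. Then the induced map ψ' : E₀/G₀ → E₁/G₁ is a Serre fibration. -/
open unitInterval

/-- A map is a Serre fibration if it has the homotopy lifting property
with respect to all cubes. -/
def IsSerreFibration {X Y : Type*} [TopologicalSpace X] [TopologicalSpace Y]
    (f : X → Y) : Prop :=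
  ∀ (n : ℕ) (H : C((Fin n → I) × I, Y)) (h₀ : C(Fin n → I, X)),
    (∀ v, f (h₀ v) = H (v, 0)) →
    ∃ H' : C((Fin n → I) × I, X),
      (∀ v, H' (v, 0) = h₀ v) ∧ ∀ z, f (H' z) = H z

/-- `E` is a (locally trivial) principal `G`-bundle over its orbit space: the quotient map
`E → E/G` admits local trivialisations, equivariant for the `G`-action. -/
def IsPrincipalGBundle (G E : Type*) [Group G] [TopologicalSpace G] [TopologicalSpace E]
    [MulAction G E] : Prop :=
  ∀ b : Quotient (MulAction.orbitRel G E),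
    ∃ U : Set (Quotient (MulAction.orbitRel G E)), IsOpen U ∧ b ∈ U ∧
      ∃ h : (Quotient.mk (MulAction.orbitRel G E) ⁻¹' U) ≃ₜ (U × G),
        (∀ x : Quotient.mk (MulAction.orbitRel G E) ⁻¹' U,
            ((h x).1 : Quotient (MulAction.orbitRel G E)) =
              Quotient.mk (MulAction.orbitRel G E) (x : E)) ∧
        ∀ (g : G) (x : Quotient.mk (MulAction.orbitRel G E) ⁻¹' U)
          (hgx : g • (x : E) ∈ Quotient.mk (MulAction.orbitRel G E) ⁻¹' U),
          (h ⟨g • (x : E), hgx⟩).2 = g * (h x).2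

/-- The map `E₀/G₀ → E₁/G₁` induced by a `φ`-equivariant map `ψ : E₀ → E₁`. -/
def quotMap {G₀ G₁ E₀ E₁ : Type*} [Group G₀] [Group G₁]
    [MulAction G₀ E₀] [MulAction G₁ E₁] (φ : G₀ →* G₁) (ψ : E₀ → E₁)
    (hψ : ∀ (g : G₀) (x : E₀), ψ (g • x) = φ g • ψ x) :
    Quotient (MulAction.orbitRel G₀ E₀) → Quotient (MulAction.orbitRel G₁ E₁) :=
  Quotient.map ψ (by
    intro x y h
    obtain ⟨g, hg⟩ := h
    exact ⟨φ g, by show φ g • ψ y = ψ x; rw [← hψ]; exact congrArg ψ hg⟩)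

open Set

/-! The orbit maps `pᵢ : Eᵢ → Eᵢ/Gᵢ` are locally trivial, hence Serre fibrations. To lift a
homotopy of cubes along a locally trivial map, subdivide the cube so finely that every cell lands
in a trivialising open set, and lift cell by cell, time slab after time slab and lexicographically
in space. Each cell then meets what is already lifted in its lower boundary, which is a retract of
the cell (push down the diagonal until a lower face is hit), and over a trivialising set a lift
extends along a retraction by keeping its fibre coordinate.

Since `ψ' ∘ p₀ = p₁ ∘ ψ` is a Serre fibration, a lifting problem for `ψ'` is solved by lifting its
initial map along `p₀` (the cube is contractible and `p₀` is onto), lifting the homotopy along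
`p₁ ∘ ψ` and projecting back with `p₀`. -/

section SerreFibration

variable {X Y Z : Type*} [TopologicalSpace X] [TopologicalSpace Y] [TopologicalSpace Z]

theorem IsSerreFibration.comp {f : Y → Z} {g : X → Y} (hf : IsSerreFibration f)
    (hg : IsSerreFibration g) (hgc : Continuous g) : IsSerreFibration (f ∘ g) := by
  intro n H h₀ hH₀
  obtain ⟨H₁, hH₁₀, hH₁⟩ := hf n H ((ContinuousMap.mk g hgc).comp h₀) hH₀
  obtain ⟨H₂, hH₂₀, hH₂⟩ := hg n H₁ h₀ fun v => (hH₁₀ v).symm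
  exact ⟨H₂, hH₂₀, fun z => by simp [hH₂, hH₁]⟩

/-- Cubes are contractible, so a map from a cube lifts along a Serre fibration as soon as one
point of it does. -/
theorem IsSerreFibration.exists_lift {f : X → Y} (hf : IsSerreFibration f)
    (hfs : Function.Surjective f) {n : ℕ} (g : C(Fin n → I, Y)) :
    ∃ g' : C(Fin n → I, X), ∀ v, f (g' v) = g v := by
  let contraction : C((Fin n → I) × I, Y) :=
    ⟨fun z => g fun i => z.2 * z.1 i, by fun_prop⟩
  obtain ⟨x, hx⟩ := hfs (g fun _ => 0)
  obtain ⟨L, -, hL⟩ := hf n contraction (.const _ x) fun v => by simp [contraction, hx]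
  exact ⟨L.comp ⟨fun v => (v, 1), by fun_prop⟩, fun v => by simp [hL, contraction]⟩

theorem IsSerreFibration.of_comp {π : X → Y} {f : Y → Z} (hπ : IsSerreFibration π)
    (hπs : Function.Surjective π) (hπc : Continuous π) (hfπ : IsSerreFibration (f ∘ π)) :
    IsSerreFibration f := by
  intro n H h₀ hH₀
  obtain ⟨l₀, hl₀⟩ := hπ.exists_lift hπs h₀
  obtain ⟨L, hL₀, hL⟩ := hfπ n H l₀ fun v => by simp [hl₀, hH₀]
  exact ⟨(ContinuousMap.mk π hπc).comp L, fun v => by simp [hL₀, hl₀], hL⟩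

end SerreFibration

section LiftsExtend

variable {X E B : Type*} [TopologicalSpace X] [TopologicalSpace E]

def LiftsExtend (p : E → B) (H : X → B) (t s : Set X) : Prop :=
  ∀ g : X → E, ContinuousOn g t → (∀ z ∈ t, p (g z) = H z) →
    ∃ g' : X → E, ContinuousOn g' s ∧ (∀ z ∈ s, p (g' z) = H z) ∧ EqOn g' g t

variable {p : E → B} {H : X → B} {s t : Set X}

theorem LiftsExtend.refl : LiftsExtend p H s s :=
  fun g hg hgH => ⟨g, hg, hgH, fun _ _ => rfl⟩

theorem LiftsExtend.trans {u : Set X} (hts : LiftsExtend p H t s) (hsu : LiftsExtend p H s u)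
    (h : t ⊆ s) : LiftsExtend p H t u := by
  intro g hg hgH
  obtain ⟨g₁, hg₁, hg₁H, hg₁g⟩ := hts g hg hgH
  obtain ⟨g₂, hg₂, hg₂H, hg₂g₁⟩ := hsu g₁ hg₁ hg₁H
  exact ⟨g₂, hg₂, hg₂H, (hg₂g₁.mono h).trans hg₁g⟩

theorem LiftsExtend.union (hs : IsClosed s) (ht : IsClosed t) (h : LiftsExtend p H (s ∩ t) t) :
    LiftsExtend p H s (s ∪ t) := by
  classical
  intro g hg hgH
  obtain ⟨g', hg', hg'H, hg'g⟩ := h g (hg.mono inter_subset_left) fun z hz => hgH z hz.1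
  have hglue : EqOn (s.piecewise g g') g' t := fun z hz => by
    by_cases hzs : z ∈ s
    · rw [piecewise_eq_of_mem _ _ _ hzs, hg'g ⟨hzs, hz⟩]
    · rw [piecewise_eq_of_notMem _ _ _ hzs]
  refine ⟨s.piecewise g g', ?_, ?_, piecewise_eqOn _ _ _⟩
  · exact (hg.congr (piecewise_eqOn _ _ _)).union_of_isClosed (hg'.congr hglue) hs ht
  · rintro z (hz | hz)
    · rw [piecewise_eq_of_mem _ _ _ hz, hgH z hz]
    · rw [hglue hz, hg'H z hz]

theorem LiftsExtend.of_retraction [TopologicalSpace B] {F : Type*} [TopologicalSpace F]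
    {U : Set B} (hU : IsHomeomorphicTrivialFiberBundle F (U.restrictPreimage p))
    {r : X → X} (hr : ContinuousOn r s) (hrs : MapsTo r s t) (hrt : ∀ z ∈ t, r z = z)
    (hts : t ⊆ s) (hH : ContinuousOn H s) (hHU : MapsTo H s U) : LiftsExtend p H t s := by
  classical
  obtain ⟨e, he⟩ := hU
  have hp : ∀ w, p (e.symm w) = w.1 := fun w => by
    simpa using congrArg Subtype.val (he (e.symm w)).symm
  intro g hg hgH
  have hgU : ∀ z ∈ s, g (r z) ∈ p ⁻¹' U := fun z hz => by
    rw [mem_preimage, hgH _ (hrs hz)]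
    exact hHU (hts (hrs hz))
  -- keep the fibre coordinate of `g ∘ r` and replace its base coordinate by `H`
  let lift : s → E := fun z => e.symm (⟨H z, hHU z.2⟩, (e ⟨g (r z), hgU z z.2⟩).2)
  have hlift : Continuous lift := by
    have hgr : Continuous fun z : s => g (r z) :=
      hg.comp_continuous hr.domRestrict fun z => hrs z.2
    exact continuous_subtype_val.comp <| e.symm.continuous.comp <|
      (hH.domRestrict.subtype_mk _).prodMk (continuous_snd.comp <| e.continuous.comp <|
        hgr.subtype_mk _)
  refine ⟨fun z => if hz : z ∈ s then lift ⟨z, hz⟩ else g z, ?_, fun z hz => ?_, fun z hz => ?_⟩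
  · rw [continuousOn_iff_continuous_domRestrict, domRestrict_dite]
    exact hlift
  · simp only [dif_pos hz, lift, hp]
  · have hzs := hts hz
    have hbase : (⟨H z, hHU hzs⟩, (e ⟨g (r z), hgU z hzs⟩).2) = e ⟨g (r z), hgU z hzs⟩ := by
      refine Prod.ext (Subtype.ext ?_) rfl
      rw [he]
      exact (hgH z hz).symm.trans (congrArg (p ∘ g) (hrt z hz).symm)
    simp only [dif_pos hzs, lift]
    rw [hbase, e.symm_apply_apply]
    exact congrArg g (hrt z hz)

theorem LiftsExtend.union_iUnion {α : Type*} [LinearOrder α] [Fintype α] {A : Set X}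
    {C : α → Set X} (hA : IsClosed A) (hC : ∀ a, IsClosed (C a))
    (h : ∀ a, LiftsExtend p H ((A ∪ ⋃ b < a, C b) ∩ C a) (C a)) :
    LiftsExtend p H A (A ∪ ⋃ a, C a) := by
  classical
  suffices key : ∀ S : Finset α, (∀ a ∈ S, ∀ b < a, b ∈ S) →
      LiftsExtend p H A (A ∪ ⋃ a ∈ S, C a) by
    simpa using key Finset.univ (by simp)
  intro S
  induction S using Finset.induction_on_max with
  | empty => simpa using (LiftsExtend.refl : LiftsExtend p H A A)
  | insert a S hlt ih =>
    intro hlow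
    have hS : ∀ b, b ∈ S ↔ b < a := fun b =>
      ⟨hlt b, fun hb => (Finset.mem_insert.1 (hlow a (S.mem_insert_self a) b hb)).resolve_left
        hb.ne⟩
    have hprev : A ∪ ⋃ b ∈ S, C b = A ∪ ⋃ b < a, C b := by simp only [hS]
    have hIH := ih fun c hc b hb => (hS b).2 (hb.trans ((hS c).1 hc))
    rw [hprev] at hIH
    rw [Finset.set_biUnion_insert, union_left_comm, hprev, union_comm (C a)]
    exact hIH.trans (.union (hA.union ((toFinite {b | b < a}).isClosed_biUnion
      fun b _ => hC b)) (hC a) (h a)) subset_union_left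

end LiftsExtend

section Grid

variable {n : ℕ}

def gridCell (N j : ℕ) (k : Fin n → ℕ) : Set ((Fin n → I) × I) :=
  {z | ((j : ℝ) / N ≤ z.2 ∧ (z.2 : ℝ) ≤ (j + 1) / N) ∧
    ∀ i, (k i : ℝ) / N ≤ z.1 i ∧ (z.1 i : ℝ) ≤ (k i + 1) / N}

/-- Faces `xᵢ = 0` on the side of the cube are left out: no lift is prescribed there. -/
def gridCellLowerBoundary (N j : ℕ) (k : Fin n → ℕ) : Set ((Fin n → I) × I) :=
  gridCell N j k ∩ {z | (z.2 : ℝ) = j / N ∨ ∃ i, 0 < k i ∧ (z.1 i : ℝ) = k i / N}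

theorem isClosed_gridCell (N j : ℕ) (k : Fin n → ℕ) : IsClosed (gridCell N j k) := by
  simp only [gridCell, ofPred_and, ofPred_forall]
  refine ((isClosed_le ?_ ?_).inter (isClosed_le ?_ ?_)).inter
    (isClosed_iInter fun i => (isClosed_le ?_ ?_).inter (isClosed_le ?_ ?_)) <;> fun_prop

theorem dist_le_of_mem_gridCell {N j : ℕ} {k : Fin n → ℕ} {z w : (Fin n → I) × I}
    (hz : z ∈ gridCell N j k) (hw : w ∈ gridCell N j k) : dist z w ≤ 1 / N := by
  have key : ∀ a x y : ℝ, a / N ≤ x → x ≤ (a + 1) / N → a / N ≤ y → y ≤ (a + 1) / N →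
      dist x y ≤ 1 / N := fun a x y hx hx' hy hy' => by
    rw [add_div] at hx' hy'
    exact abs_sub_le_iff.2 ⟨by linarith, by linarith⟩
  rw [Prod.dist_eq]
  refine max_le ((dist_pi_le_iff (by positivity)).2 fun i => ?_) ?_
  · exact key _ _ _ (hz.2 i).1 (hz.2 i).2 (hw.2 i).1 (hw.2 i).2
  · exact key _ _ _ hz.1.1 hz.1.2 hw.1.1 hw.1.2

theorem exists_div_le_le {N : ℕ} (hN : 0 < N) (x : I) :
    ∃ l : Fin N, (l : ℝ) / N ≤ x ∧ (x : ℝ) ≤ (l + 1) / N := by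
  have hN' : (0 : ℝ) < N := Nat.cast_pos.2 hN
  obtain hx | hx := (x.2.2 : (x : ℝ) ≤ 1).lt_or_eq
  · have hxN : 0 ≤ (x : ℝ) * N := mul_nonneg x.2.1 hN'.le
    refine ⟨⟨⌊(x : ℝ) * N⌋₊, (Nat.floor_lt hxN).2 (by nlinarith)⟩, ?_, ?_⟩
    · rw [div_le_iff₀ hN']
      exact Nat.floor_le hxN
    · rw [le_div_iff₀ hN']
      exact (Nat.lt_floor_add_one _).le
  · refine ⟨⟨N - 1, by omega⟩, ?_, ?_⟩ <;>
      simp [hx, Nat.cast_pred hN, div_le_one hN', hN'.ne']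

theorem exists_mem_gridCell {N : ℕ} (hN : 0 < N) (z : (Fin n → I) × I) :
    ∃ (j : Fin N) (k : Fin n → Fin N), z ∈ gridCell N j fun i => k i := by
  choose l hl using exists_div_le_le hN
  exact ⟨l z.2, fun i => l (z.1 i), hl z.2, fun i => hl (z.1 i)⟩

/-- The grid cells, ordered by time slab first and then lexicographically in space: the part of
a cell it shares with the earlier cells and the bottom of the cube is its lower boundary. -/
def lexGridCell (N : ℕ) (a : Fin N ×ₗ (Πₗ _ : Fin n, Fin N)) : Set ((Fin n → I) × I) :=
  gridCell N (ofLex a).1 fun i => ofLex (ofLex a).2 i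

theorem eq_div_of_lt_of_le {N l m : ℕ} {x : ℝ} (hlm : l < m) (hx : (m : ℝ) / N ≤ x)
    (hx' : x ≤ (l + 1) / N) : x = m / N :=
  le_antisymm (hx'.trans (div_le_div_of_nonneg_right (by exact_mod_cast hlm) N.cast_nonneg)) hx

theorem pred_div_le_and_le {N l : ℕ} (hl : 0 < l) {x : ℝ} (hx : x = l / N) :
    ((l - 1 : ℕ) : ℝ) / N ≤ x ∧ x ≤ ((l - 1 : ℕ) + 1) / N := by
  rw [Nat.cast_pred hl, sub_add_cancel, hx]
  exact ⟨div_le_div_of_nonneg_right (by linarith) N.cast_nonneg, le_rfl⟩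

theorem bottom_union_iUnion_lt_inter_lexGridCell {N : ℕ}
    (a : Fin N ×ₗ (Πₗ _ : Fin n, Fin N)) :
    ({z | z.2 = 0} ∪ ⋃ b < a, lexGridCell N b) ∩ lexGridCell N a =
      gridCellLowerBoundary N (ofLex a).1 fun i => ofLex (ofLex a).2 i := by
  set j := (ofLex a).1
  set k := (ofLex a).2
  refine Subset.antisymm ?_ fun z hz => ⟨?_, hz.1⟩
  · rintro z ⟨hz₀ | hprev, hz⟩
    · refine ⟨hz, Or.inl (le_antisymm ?_ hz.1.1)⟩
      rw [show z.2 = 0 from hz₀, Icc.coe_zero]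
      positivity
    · obtain ⟨b, hba, hzb⟩ := mem_iUnion₂.1 hprev
      refine ⟨hz, ?_⟩
      rcases Prod.Lex.lt_iff.1 hba with hj | ⟨-, i, -, hi⟩
      · exact Or.inl (eq_div_of_lt_of_le hj hz.1.1 hzb.1.2)
      · exact Or.inr ⟨i, Nat.zero_lt_of_lt hi, eq_div_of_lt_of_le hi (hz.2 i).1 (hzb.2 i).2⟩
  · obtain ⟨hz, hface | ⟨i, hi, hzi⟩⟩ := hz
    · obtain hj | hj := Nat.eq_zero_or_pos j
      · exact Or.inl (Subtype.ext (by simp [hface, hj]))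
      · exact Or.inr (mem_iUnion₂.2 ⟨toLex (⟨j - 1, by omega⟩, k),
          Prod.Lex.lt_iff.2 (Or.inl (Fin.lt_def.2 (Nat.sub_lt hj one_pos))),
          pred_div_le_and_le hj hface, hz.2⟩)
    · let k' := Function.update (ofLex k) i ⟨ofLex k i - 1, (Nat.sub_le _ _).trans_lt (Fin.isLt _)⟩
      refine Or.inr (mem_iUnion₂.2 ⟨toLex (j, toLex k'), Prod.Lex.lt_iff.2 (Or.inr
        ⟨rfl, Pi.toLex_update_lt_self_iff.2 (Fin.lt_def.2 (Nat.sub_lt hi one_pos))⟩), hz.1,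
        fun l => ?_⟩)
      obtain rfl | hl := eq_or_ne l i
      · simpa [k'] using pred_div_le_and_le hi hzi
      · simpa [k', hl] using hz.2 l

theorem coe_projIcc_sub {x a d : ℝ} (ha : 0 ≤ a) (hd : 0 ≤ d) (hda : d ≤ x - a) (hx : x ≤ 1) :
    (projIcc 0 1 zero_le_one (x - d) : ℝ) = x - d :=
  congrArg Subtype.val (projIcc_of_mem _ ⟨by linarith, by linarith⟩)

section Retraction

variable (N j : ℕ) (k : Fin n → ℕ)

/-- How far `z` can be pushed down the diagonal before it hits the lower boundary of its cell. -/
noncomputable def gridCellDepth (z : (Fin n → I) × I) : ℝ :=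
  Finset.univ.inf' Finset.univ_nonempty fun o : Option {i // 0 < k i} =>
    o.elim ((z.2 : ℝ) - j / N) fun i => (z.1 i : ℝ) - k i / N

noncomputable def gridCellRetraction (z : (Fin n → I) × I) : (Fin n → I) × I :=
  (fun i => if 0 < k i then projIcc 0 1 zero_le_one (z.1 i - gridCellDepth N j k z) else z.1 i,
    projIcc 0 1 zero_le_one (z.2 - gridCellDepth N j k z))

theorem continuous_gridCellDepth : Continuous (gridCellDepth (n := n) N j k) :=
  Continuous.finset_inf'_apply _ fun o _ => by cases o <;> dsimp only [Option.elim] <;> fun_prop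

theorem continuous_gridCellRetraction : Continuous (gridCellRetraction (n := n) N j k) := by
  have := continuous_gridCellDepth N j k
  refine .prodMk (continuous_pi fun i => ?_) (by fun_prop)
  split_ifs <;> fun_prop

theorem gridCellDepth_le_time (z : (Fin n → I) × I) : gridCellDepth N j k z ≤ z.2 - j / N :=
  Finset.inf'_le _ (Finset.mem_univ none)

variable {k} in
theorem gridCellDepth_le_coord (z : (Fin n → I) × I) {i : Fin n} (hi : 0 < k i) :
    gridCellDepth N j k z ≤ z.1 i - k i / N :=
  Finset.inf'_le _ (Finset.mem_univ (some ⟨i, hi⟩ : Option {i // 0 < k i}))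

theorem gridCellDepth_eq_or_exists (z : (Fin n → I) × I) : gridCellDepth N j k z = z.2 - j / N ∨
    ∃ i, 0 < k i ∧ gridCellDepth N j k z = z.1 i - k i / N := by
  obtain ⟨o, -, ho⟩ := Finset.exists_mem_eq_inf' Finset.univ_nonempty
    fun o : Option {i // 0 < k i} => o.elim ((z.2 : ℝ) - j / N) fun i => (z.1 i : ℝ) - k i / N
  cases o with
  | none => exact Or.inl ho
  | some i => exact Or.inr ⟨i, i.2, ho⟩

variable {N j k} {z : (Fin n → I) × I}

theorem gridCellDepth_nonneg (hz : z ∈ gridCell N j k) : 0 ≤ gridCellDepth N j k z := by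
  refine Finset.le_inf' _ _ fun o _ => ?_
  cases o with
  | none => exact sub_nonneg.2 hz.1.1
  | some i => exact sub_nonneg.2 (hz.2 i).1

theorem mapsTo_gridCellRetraction :
    MapsTo (gridCellRetraction N j k) (gridCell N j k) (gridCellLowerBoundary N j k) := by
  intro z hz
  have hd := gridCellDepth_nonneg hz
  have hdt := gridCellDepth_le_time N j k z
  have hdx := fun i (hi : 0 < k i) => gridCellDepth_le_coord N j z hi
  have ht : ((gridCellRetraction N j k z).2 : ℝ) = z.2 - gridCellDepth N j k z :=
    coe_projIcc_sub (by positivity) hd hdt z.2.2.2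
  have hx : ∀ i, 0 < k i →
      ((gridCellRetraction N j k z).1 i : ℝ) = z.1 i - gridCellDepth N j k z := fun i hi => by
    simpa [gridCellRetraction, hi] using
      coe_projIcc_sub (by positivity) hd (hdx i hi) (z.1 i).2.2
  refine ⟨⟨⟨by linarith, by linarith [hz.1.2]⟩, fun i => ?_⟩, ?_⟩
  · by_cases hi : 0 < k i
    · rw [hx i hi]
      exact ⟨by linarith [hdx i hi], by linarith [(hz.2 i).2]⟩
    · simpa [gridCellRetraction, hi] using hz.2 i
  · rcases gridCellDepth_eq_or_exists N j k z with h | ⟨i, hi, h⟩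
    · exact Or.inl (by rw [ht, h]; ring)
    · exact Or.inr ⟨i, hi, by rw [hx i hi, h]; ring⟩

theorem gridCellRetraction_eq_self (hz : z ∈ gridCellLowerBoundary N j k) :
    gridCellRetraction N j k z = z := by
  have hd : gridCellDepth N j k z = 0 := by
    refine le_antisymm ?_ (gridCellDepth_nonneg hz.1)
    rcases hz.2 with h | ⟨i, hi, h⟩
    · linarith [gridCellDepth_le_time N j k z]
    · linarith [gridCellDepth_le_coord N j z hi]
  ext i <;> simp [gridCellRetraction, hd]

end Retraction

theorem exists_pos_forall_gridCell_subset {ι : Type*} {c : ι → Set ((Fin n → I) × I)}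
    (hc : ∀ i, IsOpen (c i)) (hcover : ∀ z, ∃ i, z ∈ c i) :
    ∃ N > 0, ∀ j k, ∃ i, gridCell N j k ⊆ c i := by
  obtain ⟨δ, hδ, hball⟩ := lebesgue_number_lemma_of_metric isCompact_univ hc
    fun z _ => mem_iUnion.2 (hcover z)
  obtain ⟨M, hM⟩ := exists_nat_one_div_lt hδ
  refine ⟨M + 1, M.succ_pos, fun j k => ?_⟩
  rcases (gridCell (M + 1) j k).eq_empty_or_nonempty with hempty | ⟨z₀, hz₀⟩
  · obtain ⟨i, -⟩ := hcover (fun _ => 0, 0)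
    exact ⟨i, hempty ▸ empty_subset _⟩
  · obtain ⟨i, hi⟩ := hball z₀ (mem_univ _)
    refine ⟨i, fun z hz => hi (Metric.mem_ball.2 ?_)⟩
    exact (dist_le_of_mem_gridCell hz hz₀).trans_lt (by exact_mod_cast hM)

theorem liftsExtend_bottom_univ {E B : Type*} [TopologicalSpace E] {p : E → B}
    {H : (Fin n → I) × I → B} {N : ℕ} (hN : 0 < N)
    (h : ∀ j k, LiftsExtend p H (gridCellLowerBoundary N j k) (gridCell N j k)) :
    LiftsExtend p H {z | z.2 = 0} univ := by
  have hcells := LiftsExtend.union_iUnion (p := p) (H := H) (C := lexGridCell N)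
    (isClosed_eq continuous_snd continuous_const) (fun a => isClosed_gridCell _ _ _) fun a => by
      rw [bottom_union_iUnion_lt_inter_lexGridCell]
      exact h _ _
  convert hcells
  refine (eq_univ_of_forall fun z => ?_).symm
  obtain ⟨j, k, hz⟩ := exists_mem_gridCell hN z
  exact Or.inr (mem_iUnion.2 ⟨toLex (j, toLex k), hz⟩)

end Grid

theorem isSerreFibration_of_liftsExtend {E B : Type*} [TopologicalSpace E] [TopologicalSpace B]
    {p : E → B} (h : ∀ n (H : C((Fin n → I) × I, B)), LiftsExtend p H {z | z.2 = 0} univ) :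
    IsSerreFibration p := by
  intro n H h₀ hH₀
  obtain ⟨L, hL, hLH, hL₀⟩ := h n H (fun z => h₀ z.1) (by fun_prop) fun z hz => by
    rw [hH₀, ← show z.2 = 0 from hz]
  exact ⟨⟨L, continuousOn_univ.1 hL⟩, fun v => hL₀ rfl, fun z => hLH z trivial⟩

theorem isSerreFibration_of_locallyTrivial {E B : Type*} (F : Type*) [TopologicalSpace E]
    [TopologicalSpace B] [TopologicalSpace F] {p : E → B}
    (hp : ∀ b, ∃ U : Set B, IsOpen U ∧ b ∈ U ∧
      IsHomeomorphicTrivialFiberBundle F (U.restrictPreimage p)) :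
    IsSerreFibration p := by
  choose U hUo hbU hU using hp
  refine isSerreFibration_of_liftsExtend fun n H => ?_
  obtain ⟨N, hN, hcell⟩ := exists_pos_forall_gridCell_subset (c := fun b => H ⁻¹' U b)
    (fun b => (hUo b).preimage H.continuous) fun z => ⟨H z, hbU (H z)⟩
  refine liftsExtend_bottom_univ hN fun j k => ?_
  obtain ⟨b, hb⟩ := hcell j k
  exact .of_retraction (hU b) (continuous_gridCellRetraction N j k).continuousOn
    mapsTo_gridCellRetraction (fun z => gridCellRetraction_eq_self) inter_subset_left
    H.continuous.continuousOn hb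

theorem IsPrincipalGBundle.isSerreFibration {G E : Type*} [Group G] [TopologicalSpace G]
    [TopologicalSpace E] [MulAction G E] (h : IsPrincipalGBundle G E) :
    IsSerreFibration (Quotient.mk (MulAction.orbitRel G E)) :=
  isSerreFibration_of_locallyTrivial G fun b => by
    obtain ⟨U, hU, hb, e, he, -⟩ := h b
    exact ⟨U, hU, hb, e, fun x => Subtype.ext (he x)⟩

theorem isSerreFibration_quotMap_general
    {G₀ G₁ E₀ E₁ : Type*} [Group G₀] [Group G₁]
    [TopologicalSpace G₀] [TopologicalSpace G₁]
    [TopologicalSpace E₀] [TopologicalSpace E₁]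
    [MulAction G₀ E₀] [MulAction G₁ E₁]
    (φ : G₀ →* G₁)
    (hE₀ : IsPrincipalGBundle G₀ E₀) (hE₁ : IsPrincipalGBundle G₁ E₁)
    (ψ : E₀ → E₁) (hψ_cont : Continuous ψ) (hψ : IsSerreFibration ψ)
    (hψ_equiv : ∀ (g : G₀) (x : E₀), ψ (g • x) = φ g • ψ x) :
    IsSerreFibration (quotMap φ ψ hψ_equiv) :=
  hE₀.isSerreFibration.of_comp Quotient.mk_surjective continuous_quotient_mk'
    (hE₁.isSerreFibration.comp hψ hψ_cont)

/-- Let `φ : G₀ → G₁` be a homomorphism of topological groups which is also a Serre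
fibration, let `Eᵢ → Eᵢ/Gᵢ` be principal `Gᵢ`-bundles and let `ψ : E₀ → E₁` be a
`φ`-equivariant Serre fibration. Then the induced map `E₀/G₀ → E₁/G₁`
is a Serre fibration. -/
theorem isSerreFibration_quotMap
    {G₀ G₁ E₀ E₁ : Type*} [Group G₀] [Group G₁]
    [TopologicalSpace G₀] [TopologicalSpace G₁] [IsTopologicalGroup G₀] [IsTopologicalGroup G₁]
    [TopologicalSpace E₀] [TopologicalSpace E₁]
    [MulAction G₀ E₀] [MulAction G₁ E₁] [ContinuousSMul G₀ E₀] [ContinuousSMul G₁ E₁]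
    (φ : G₀ →* G₁) (hφ_cont : Continuous φ) (hφ : IsSerreFibration φ)
    (hE₀ : IsPrincipalGBundle G₀ E₀) (hE₁ : IsPrincipalGBundle G₁ E₁)
    (ψ : E₀ → E₁) (hψ_cont : Continuous ψ) (hψ : IsSerreFibration ψ)
    (hψ_equiv : ∀ (g : G₀) (x : E₀), ψ (g • x) = φ g • ψ x) :
    IsSerreFibration (quotMap φ ψ hψ_equiv) :=
  isSerreFibration_quotMap_general φ hE₀ hE₁ ψ hψ_cont hψ hψ_equiv
end

section
/- If p : E → B is a Serre fibration with nonempty fibres and q : B → C is a map such that q ∘ p is a Serre fibration, then q is a Serre fibration. -/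
/-
The cube is contractible, so any map from it into `B` lifts along `p` as soon as one point
lifts: lift the contraction homotopy from a constant map. Given a homotopy `H` in `C` starting at
`q ∘ h₀`, lift `h₀` to `E` in this way, lift `H` along `q ∘ p` from there, and push the result
down to `B` by `p`.
-/

open unitInterval

def cubeContraction (n : ℕ) : C((Fin n → I) × I, Fin n → I) :=
  ⟨fun z i => z.2 * z.1 i, by fun_prop⟩

@[simp]
theorem cubeContraction_zero (n : ℕ) (v : Fin n → I) : cubeContraction n (v, 0) = 0 := by
  funext i
  exact zero_mul (v i)

@[simp]
theorem cubeContraction_one (n : ℕ) (v : Fin n → I) : cubeContraction n (v, 1) = v := by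
  funext i
  exact one_mul (v i)

theorem IsSerreFibration.exists_lift_of_cube {E B : Type*} [TopologicalSpace E]
    [TopologicalSpace B] {p : E → B} (hp : IsSerreFibration p) {n : ℕ}
    (f : C(Fin n → I, B)) (hf : ∃ e, p e = f 0) :
    ∃ g : C(Fin n → I, E), ∀ v, p (g v) = f v := by
  obtain ⟨e, he⟩ := hf
  obtain ⟨H, hH₀, hH⟩ :=
    hp n (f.comp (cubeContraction n)) (.const _ e) fun v => by simp [he]
  exact ⟨H.comp ⟨fun v => (v, 1), by fun_prop⟩, fun v => by simp [hH]⟩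

theorem serreFibration_of_comp_general {E B C : Type*} [TopologicalSpace E] [TopologicalSpace B]
    [TopologicalSpace C] (p : E → B) (q : B → C)
    (hp_cont : Continuous p)
    (hp : IsSerreFibration p)
    (hfib : ∀ b : B, ∃ e : E, p e = b)
    (hqp : IsSerreFibration (q ∘ p)) :
    IsSerreFibration q := by
  intro n H h₀ hh₀
  obtain ⟨g, hg⟩ := hp.exists_lift_of_cube h₀ (hfib _)
  obtain ⟨H', hH'₀, hH'⟩ := hqp n H g fun v => by simp [hg, hh₀]
  exact ⟨(⟨p, hp_cont⟩ : C(E, B)).comp H', fun v => by simp [hH'₀, hg], hH'⟩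

/-- If `p : E → B` is a Serre fibration with nonempty fibres and `q : B → C` is a
continuous map such that `q ∘ p` is a Serre fibration, then `q` is a Serre fibration. -/
theorem serreFibration_of_comp {E B C : Type*} [TopologicalSpace E] [TopologicalSpace B]
    [TopologicalSpace C] (p : E → B) (q : B → C)
    (hp_cont : Continuous p) (hq_cont : Continuous q)
    (hp : IsSerreFibration p)
    (hfib : ∀ b : B, ∃ e : E, p e = b)
    (hqp : IsSerreFibration (q ∘ p)) :
    IsSerreFibration q :=
  serreFibration_of_comp_general p q hp_cont hp hfib hqp
end

section
/- Let M₁ → M₂ → M₃ → M₄ be an exact sequence of commutative monoids (exact meaning the image of each map equals the preimage of the identity under the next). If M₁, M₃, and M₄ are groups, then M₂ is a group. -/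
/-!
Given `a : M₂`, let `c` be an inverse of `g a`. Since `h (g a) = 1`, also `h c = 1`, so by exactness
at `M₃` we have `c = g b`. Then `g (a * b) = 1`, so by exactness at `M₂` the product `a * b` is the
image of an element of the group `M₁`, hence a unit, and therefore so is its factor `a`.
-/

section ExactSequence

variable {M₁ M₂ M₃ M₄ : Type*} [Monoid M₁] [Monoid M₂] [Monoid M₃] [Monoid M₄]

theorem exists_map_mul_eq_one_of_isUnit_map (g : M₂ →* M₃) (h : M₃ →* M₄)
    (hexact : ∀ m : M₃, h m = 1 ↔ ∃ m' : M₂, g m' = m) {a : M₂} (ha : IsUnit (g a)) :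
    ∃ b : M₂, g (a * b) = 1 := by
  obtain ⟨u, hu⟩ := ha
  have hga : h (g a) = 1 := (hexact _).2 ⟨a, rfl⟩
  have hinv : h ↑u⁻¹ = 1 :=
    calc h ↑u⁻¹ = h (g a * ↑u⁻¹) := by rw [map_mul, hga, one_mul]
      _ = 1 := by rw [← hu, u.mul_inv, map_one]
  obtain ⟨b, hb⟩ := (hexact _).1 hinv
  exact ⟨b, by rw [map_mul, hb, ← hu, u.mul_inv]⟩

theorem isUnit_of_map_eq_one (f : M₁ →* M₂) (g : M₂ →* M₃)
    (hexact : ∀ m : M₂, g m = 1 → ∃ m' : M₁, f m' = m) (hM₁ : ∀ m : M₁, IsUnit m)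
    {a : M₂} (ha : g a = 1) : IsUnit a := by
  obtain ⟨m, rfl⟩ := hexact a ha
  exact (hM₁ m).map f

theorem isUnit_of_isUnit_map [IsDedekindFiniteMonoid M₂]
    (f : M₁ →* M₂) (g : M₂ →* M₃) (h : M₃ →* M₄)
    (hexact₂ : ∀ m : M₂, g m = 1 → ∃ m' : M₁, f m' = m)
    (hexact₃ : ∀ m : M₃, h m = 1 ↔ ∃ m' : M₂, g m' = m) (hM₁ : ∀ m : M₁, IsUnit m)
    {a : M₂} (ha : IsUnit (g a)) : IsUnit a := by
  obtain ⟨b, hb⟩ := exists_map_mul_eq_one_of_isUnit_map g h hexact₃ ha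
  exact isUnit_of_mul_isUnit_left (isUnit_of_map_eq_one f g hexact₂ hM₁ hb)

end ExactSequence

theorem isGroup_of_exact_commMonoids_general
    {M₁ M₂ M₃ M₄ : Type*} [CommMonoid M₁] [CommMonoid M₂] [CommMonoid M₃] [CommMonoid M₄]
    (f : M₁ →* M₂) (g : M₂ →* M₃) (h : M₃ →* M₄)
    (hexact₂ : ∀ m : M₂, g m = 1 ↔ ∃ m' : M₁, f m' = m)
    (hexact₃ : ∀ m : M₃, h m = 1 ↔ ∃ m' : M₂, g m' = m)
    (hM₁ : ∀ a : M₁, ∃ b : M₁, a * b = 1)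
    (hM₃ : ∀ a : M₃, ∃ b : M₃, a * b = 1) :
    ∀ a : M₂, ∃ b : M₂, a * b = 1 := by
  intro a
  have hunits₁ : ∀ m : M₁, IsUnit m := fun m => isUnit_iff_exists_inv.2 (hM₁ m)
  have hga : IsUnit (g a) := isUnit_iff_exists_inv.2 (hM₃ (g a))
  exact isUnit_iff_exists_inv.1
    (isUnit_of_isUnit_map f g h (fun m => (hexact₂ m).1) hexact₃ hunits₁ hga)

/-- Let `M₁ → M₂ → M₃ → M₄` be an exact sequence of commutative monoids (exactness
meaning that the image of each map equals the preimage of the identity under the next).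
If `M₁`, `M₃` and `M₄` are groups (every element is invertible), then `M₂` is a group. -/
theorem isGroup_of_exact_commMonoids
    {M₁ M₂ M₃ M₄ : Type*} [CommMonoid M₁] [CommMonoid M₂] [CommMonoid M₃] [CommMonoid M₄]
    (f : M₁ →* M₂) (g : M₂ →* M₃) (h : M₃ →* M₄)
    (hexact₂ : ∀ m : M₂, g m = 1 ↔ ∃ m' : M₁, f m' = m)
    (hexact₃ : ∀ m : M₃, h m = 1 ↔ ∃ m' : M₂, g m' = m)
    (hM₁ : ∀ a : M₁, ∃ b : M₁, a * b = 1)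
    (hM₃ : ∀ a : M₃, ∃ b : M₃, a * b = 1)
    (hM₄ : ∀ a : M₄, ∃ b : M₄, a * b = 1) :
    ∀ a : M₂, ∃ b : M₂, a * b = 1 :=
  isGroup_of_exact_commMonoids_general f g h hexact₂ hexact₃ hM₁ hM₃
end

section
/- Let Ω be an uncountable set, X a finite-dimensional countable simplicial complex, and U¹, U², … a sequence of open covers of |X|, where Uⁱ = (U_{(i,s)})_{s ∈ Ω}. Then there exists a (locally finite) open cover O = (O_i)_{i ∈ ℕ} of |X| and a function φ = (φ₁, φ₂) : ℕ → ℕ × Ω such that (i) O_i ⊆ U_{φ(i)} for each i, and (ii) whenever O_i ∩ O_j ≠ ∅ with i ≠ j, one has φ₁(i) ≠ φ₁(j). -/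
/-!
In the sup metric on `ℝⁿ` the balls of radius `r` centred at the points of `r ℤⁿ` cover `ℝⁿ`,
and two distinct ones whose centres are congruent modulo `2r` are disjoint; so they fall into
`2ⁿ` parity classes of pairwise disjoint open sets. A simplex of `K` maps linearly and injectively
to some `ℝⁿ`, and by compactness the preimages of these balls, for `r` small, are small enough on
the simplex to lie in a member of each of the `2ⁿ` covers `U_i` attached to the pairs
(simplex, parity class). With countably many simplices and colours this yields a countable open
cover of `|K|` in which overlapping members come from covers with distinct indices, and a locally
finite shrinking, which exists since `|K|` is metrisable, keeps these properties.
-/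

open Geometry Set
open Metric

section Lattice

variable {ι : Type*} [Fintype ι] {r : ℝ}

theorem exists_mem_ball_intLattice (hr : 0 < r) (x : ι → ℝ) :
    ∃ z : ι → ℤ, x ∈ ball (fun j => r * z j) r := by
  refine ⟨fun j => round (x j / r), (dist_pi_lt_iff hr).2 fun j => ?_⟩
  have h := abs_sub_round (x j / r)
  rw [Real.dist_eq, show x j - r * round (x j / r) = r * (x j / r - round (x j / r)) by
    field_simp, abs_mul, abs_of_pos hr]
  nlinarith

theorem disjoint_ball_intLattice (hr : 0 < r) {z z' : ι → ℤ} (hne : z ≠ z')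
    (hpar : (Int.cast ∘ z : ι → ZMod 2) = Int.cast ∘ z') :
    Disjoint (ball (fun j => r * z j) r) (ball (fun j => r * z' j) r) := by
  obtain ⟨j, hj⟩ := Function.ne_iff.1 hne
  have hdvd : (2 : ℤ) ∣ z' j - z j :=
    (ZMod.intCast_eq_intCast_iff_dvd_sub _ _ 2).1 (congrFun hpar j)
  have hgap : (2 : ℤ) ≤ |z j - z' j| := by
    rcases abs_cases (z j - z' j) with ⟨h, h'⟩ | ⟨h, h'⟩ <;> omega
  refine ball_disjoint_ball (le_trans ?_ (dist_le_pi_dist _ _ j))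
  rw [Real.dist_eq, ← mul_sub, abs_mul, abs_of_pos hr]
  have : (2 : ℝ) ≤ |(z j : ℝ) - z' j| := by exact_mod_cast hgap
  nlinarith

end Lattice

theorem exists_lattice_refinement {X ι Ω : Type*} [PseudoMetricSpace X] [Fintype ι]
    [Nonempty Ω] {S : Set X} (hS : IsCompact S) {f : X → ι → ℝ} (hf : Continuous f)
    (hfS : ∀ ε > 0, ∃ η > 0, ∀ p ∈ S, ∀ q ∈ S, dist (f p) (f q) < η → dist p q < ε)
    (V : (ι → ZMod 2) → Ω → Set X) (hVopen : ∀ π s, IsOpen (V π s))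
    (hVcover : ∀ π, S ⊆ ⋃ s, V π s) :
    ∃ (B : (ι → ℤ) → Set X) (s : (ι → ℤ) → Ω), (∀ z, IsOpen (B z)) ∧ S ⊆ ⋃ z, B z ∧
      (∀ z z', z ≠ z' → (Int.cast ∘ z : ι → ZMod 2) = Int.cast ∘ z' → Disjoint (B z) (B z')) ∧
      ∀ z, B z ⊆ V (Int.cast ∘ z) (s z) := by
  obtain ⟨δ, hδ, hleb⟩ : ∃ δ > 0, ∀ x ∈ S, ∃ σ : (ι → ZMod 2) → Ω, ball x δ ⊆ ⋂ π, V π (σ π) := by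
    refine lebesgue_number_lemma_of_metric hS
      (fun σ => isOpen_iInter_of_finite fun π => hVopen π (σ π)) fun x hx => ?_
    choose σ hσ using fun π => mem_iUnion.1 (hVcover π hx)
    exact mem_iUnion.2 ⟨σ, mem_iInter.2 hσ⟩
  obtain ⟨η, hη, hfη⟩ := hfS δ hδ
  have hr : 0 < η / 2 := half_pos hη
  set A : (ι → ℤ) → Set X := fun z => f ⁻¹' ball (fun j => η / 2 * z j) (η / 2)
  -- `A z` has `f`-diameter `< η`, so on `S` it lies in a `δ`-ball
  have hA : ∀ z, ∃ s, A z ∩ S ⊆ V (Int.cast ∘ z) s := by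
    intro z
    rcases (A z ∩ S).eq_empty_or_nonempty with h | ⟨p, hpA, hpS⟩
    · exact ⟨Classical.arbitrary Ω, h ▸ empty_subset _⟩
    obtain ⟨σ, hσ⟩ := hleb p hpS
    refine ⟨σ (Int.cast ∘ z), fun q ⟨hqA, hqS⟩ => iInter_subset (fun π => V π (σ π)) _ (hσ ?_)⟩
    refine mem_ball.2 (hfη q hqS p hpS ?_)
    linarith [dist_triangle_right (f q) (f p) (fun j => η / 2 * z j), mem_ball.1 hqA,
      mem_ball.1 hpA]
  choose s hs using hA
  refine ⟨fun z => A z ∩ V (Int.cast ∘ z) (s z), s,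
    fun z => (isOpen_ball.preimage hf).inter (hVopen _ _), fun x hx => ?_,
    fun z z' hne hpar => ((disjoint_ball_intLattice hr hne hpar).preimage f).mono
      inter_subset_left inter_subset_left, fun z => inter_subset_right⟩
  obtain ⟨z, hz⟩ := exists_mem_ball_intLattice hr (f x)
  exact mem_iUnion.2 ⟨z, hz, hs z ⟨hz, hx⟩⟩

theorem Submodule.exists_continuousLinearMap_uniformInjOn {E : Type*} [NormedAddCommGroup E]
    [NormedSpace ℝ E] (V : Submodule ℝ E) [FiniteDimensional ℝ V] :
    ∃ (n : ℕ) (f : E →L[ℝ] (Fin n → ℝ)), ∀ ε > 0, ∃ η > 0,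
      ∀ p ∈ V, ∀ q ∈ V, dist (f p) (f q) < η → dist p q < ε := by
  obtain ⟨P, hP⟩ := Submodule.ClosedComplemented.of_finiteDimensional V
  let e : V ≃L[ℝ] (Fin (Module.finrank ℝ V) → ℝ) :=
    (Module.finBasis ℝ V).equivFun.toContinuousLinearEquiv
  set C := ‖e.symm.toContinuousLinearMap‖ + 1
  have hC : 0 < C := by positivity
  let f : E →L[ℝ] (Fin (Module.finrank ℝ V) → ℝ) := e.toContinuousLinearMap ∘L P
  refine ⟨_, f, fun ε hε => ⟨ε / C, div_pos hε hC, fun p hp q hq hpq => ?_⟩⟩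
  set v : V := ⟨p - q, V.sub_mem hp hq⟩
  have hfv : dist (f p) (f q) = ‖e v‖ := by
    rw [dist_eq_norm, ← map_sub, ContinuousLinearMap.comp_apply, show p - q = (v : E) from rfl, hP]
    rfl
  rw [hfv, lt_div_iff₀ hC] at hpq
  calc dist p q = ‖e.symm (e v)‖ := by rw [e.symm_apply_apply, dist_eq_norm]; rfl
    _ ≤ ‖e.symm.toContinuousLinearMap‖ * ‖e v‖ := e.symm.toContinuousLinearMap.le_opNorm (e v)
    _ ≤ ‖e v‖ * C := by nlinarith [norm_nonneg (e v)]
    _ < ε := hpq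

structure IsColoredRefinement {X α β Ω : Type*} [TopologicalSpace X] (U : β → Ω → Set X)
    (G : α → Set X) (φ : α → β × Ω) : Prop where
  isOpen : ∀ a, IsOpen (G a)
  iUnion_eq : ⋃ a, G a = univ
  subset : ∀ a, G a ⊆ U (φ a).1 (φ a).2
  fst_ne : ∀ a b, a ≠ b → (G a ∩ G b).Nonempty → (φ a).1 ≠ (φ b).1

namespace IsColoredRefinement

variable {X α β Ω : Type*} [TopologicalSpace X] {U : β → Ω → Set X} {G : α → Set X}
  {φ : α → β × Ω}

theorem exists_nat [Countable α] [Nonempty β] [Nonempty Ω] (h : IsColoredRefinement U G φ) :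
    ∃ (G' : ℕ → Set X) (φ' : ℕ → β × Ω), IsColoredRefinement U G' φ' := by
  obtain ⟨e, he⟩ := exists_injective_nat α
  set G' := Function.extend e G fun _ => ∅
  have hG' : ∀ n, (∃ a, e a = n) ∨ G' n = ∅ := fun n =>
    (em _).imp_right (Function.extend_apply' _ _ n)
  have hG'e : ∀ a, G' (e a) = G a := he.extend_apply G _
  set φ' := Function.extend e φ fun _ => Classical.arbitrary _
  have hφ'e : ∀ a, φ' (e a) = φ a := he.extend_apply φ _
  refine ⟨G', φ', ⟨fun n => ?_, ?_, fun n => ?_, ?_⟩⟩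
  · rcases hG' n with ⟨a, rfl⟩ | h0
    · exact hG'e a ▸ h.isOpen a
    · exact h0 ▸ isOpen_empty
  · refine iUnion_eq_univ_iff.2 fun x => ?_
    obtain ⟨a, ha⟩ := iUnion_eq_univ_iff.1 h.iUnion_eq x
    exact ⟨e a, (hG'e a).symm ▸ ha⟩
  · rcases hG' n with ⟨a, rfl⟩ | h0
    · rw [hG'e, hφ'e]
      exact h.subset a
    · exact h0 ▸ empty_subset _
  · rintro m n hmn ⟨x, hxm, hxn⟩
    obtain ⟨a, rfl⟩ := (hG' m).resolve_right (nonempty_of_mem hxm).ne_empty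
    obtain ⟨b, rfl⟩ := (hG' n).resolve_right (nonempty_of_mem hxn).ne_empty
    rw [hG'e] at hxm hxn
    rw [hφ'e, hφ'e]
    exact h.fst_ne a b (ne_of_apply_ne e hmn) ⟨x, hxm, hxn⟩

theorem exists_locallyFinite [ParacompactSpace X] (h : IsColoredRefinement U G φ) :
    ∃ O : α → Set X, IsColoredRefinement U O φ ∧ LocallyFinite O := by
  obtain ⟨O, hOopen, hOcover, hOlf, hOG⟩ := precise_refinement G h.isOpen h.iUnion_eq
  exact ⟨O, ⟨hOopen, hOcover, fun a => (hOG a).trans (h.subset a), fun a b hab hmeet =>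
    h.fst_ne a b hab (hmeet.mono (inter_subset_inter (hOG a) (hOG b)))⟩, hOlf⟩

end IsColoredRefinement

namespace Geometry.SimplicialComplex

variable {E : Type*} [NormedAddCommGroup E] [NormedSpace ℝ E] (K : SimplicialComplex ℝ E)

theorem isCompact_preimage_convexHull {σ : Finset E} (hσ : σ ∈ K.faces) :
    IsCompact (((↑) : K.space → E) ⁻¹' convexHull ℝ (σ : Set E)) := by
  rw [Subtype.isCompact_iff, image_preimage_eq_of_subset]
  · exact σ.finite_toSet.isCompact_convexHull ℝ
  · rw [Subtype.range_coe]
    exact K.convexHull_subset_space hσ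

theorem exists_lattice_refinement_face {Ω : Type*} [Nonempty Ω] {σ : Finset E}
    (hσ : σ ∈ K.faces) :
    ∃ n : ℕ, ∀ V : (Fin n → ZMod 2) → Ω → Set K.space, (∀ π s, IsOpen (V π s)) →
      (∀ π, ⋃ s, V π s = univ) →
      ∃ (B : (Fin n → ℤ) → Set K.space) (s : (Fin n → ℤ) → Ω), (∀ z, IsOpen (B z)) ∧
        ((↑) ⁻¹' convexHull ℝ (σ : Set E) ⊆ ⋃ z, B z) ∧
        (∀ z z', z ≠ z' → (Int.cast ∘ z : Fin n → ZMod 2) = Int.cast ∘ z' →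
          Disjoint (B z) (B z')) ∧
        ∀ z, B z ⊆ V (Int.cast ∘ z) (s z) := by
  obtain ⟨n, f, hf⟩ := (Submodule.span ℝ (σ : Set E)).exists_continuousLinearMap_uniformInjOn
  have hspan : convexHull ℝ (σ : Set E) ⊆ Submodule.span ℝ (σ : Set E) :=
    convexHull_min Submodule.subset_span (Submodule.span ℝ _).convex
  refine ⟨n, fun V hVopen hVcover => exists_lattice_refinement (K.isCompact_preimage_convexHull hσ)
    (f.continuous.comp continuous_subtype_val) (fun ε hε => ?_) V hVopen
    fun π => (hVcover π).symm ▸ subset_univ _⟩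
  obtain ⟨η, hη, hfη⟩ := hf ε hε
  exact ⟨η, hη, fun p hp q hq => hfη p (hspan hp) q (hspan hq)⟩

theorem exists_isColoredRefinement (hcount : K.faces.Countable) {Ω : Type*} [Nonempty Ω]
    (U : ℕ → Ω → Set K.space) (hUopen : ∀ i s, IsOpen (U i s))
    (hUcover : ∀ i, ⋃ s, U i s = univ) :
    ∃ (G : ℕ → Set K.space) (φ : ℕ → ℕ × Ω), IsColoredRefinement U G φ := by
  have : Countable K.faces := hcount.to_subtype
  choose n hn using fun σ : K.faces => K.exists_lattice_refinement_face (Ω := Ω) σ.2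
  obtain ⟨e, he⟩ := exists_injective_nat (Σ σ : K.faces, Fin (n σ) → ZMod 2)
  choose B s hBopen hBcover hBdisj hBU using fun σ =>
    hn σ (fun π => U (e ⟨σ, π⟩)) (fun _ => hUopen _) (fun _ => hUcover _)
  refine IsColoredRefinement.exists_nat (G := fun a : Σ σ : K.faces, Fin (n σ) → ℤ => B a.1 a.2)
    (φ := fun a => (e ⟨a.1, Int.cast ∘ a.2⟩, s a.1 a.2))
    ⟨fun a => hBopen a.1 a.2, iUnion_eq_univ_iff.2 fun x => ?_, fun a => hBU a.1 a.2, ?_⟩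
  · obtain ⟨σ, hσ, hx⟩ := mem_space_iff.1 x.2
    obtain ⟨z, hz⟩ := mem_iUnion.1 (hBcover ⟨σ, hσ⟩ hx)
    exact ⟨⟨⟨σ, hσ⟩, z⟩, hz⟩
  · rintro ⟨σ, z⟩ ⟨σ', z'⟩ hne hmeet hcol
    obtain ⟨rfl, hpar⟩ := Sigma.mk.inj_iff.1 (he hcol)
    exact not_disjoint_iff_nonempty_inter.2 hmeet
      (hBdisj σ z z' (fun h => hne (h ▸ rfl)) (eq_of_heq hpar))

end Geometry.SimplicialComplex

theorem covering_lemma_general {E : Type*} [NormedAddCommGroup E] [NormedSpace ℝ E]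
    (K : SimplicialComplex ℝ E)
    (hcount : K.faces.Countable)
    (Ω : Type*) [Uncountable Ω]
    (U : ℕ → Ω → Set K.space)
    (hUopen : ∀ i s, IsOpen (U i s))
    (hUcover : ∀ i : ℕ, (⋃ s : Ω, U i s) = univ) :
    ∃ (O : ℕ → Set K.space) (φ : ℕ → ℕ × Ω),
      (∀ i, IsOpen (O i)) ∧
      (⋃ i : ℕ, O i) = univ ∧
      LocallyFinite O ∧
      (∀ i, O i ⊆ U (φ i).1 (φ i).2) ∧
      (∀ i j, i ≠ j → (O i ∩ O j).Nonempty → (φ i).1 ≠ (φ j).1) := by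
  obtain ⟨G, φ, hG⟩ := K.exists_isColoredRefinement hcount U hUopen hUcover
  obtain ⟨O, hO, hOlf⟩ := hG.exists_locallyFinite
  exact ⟨O, φ, hO.isOpen, hO.iUnion_eq, hOlf, hO.subset, hO.fst_ne⟩

/-- Let `Ω` be an uncountable set, `K` a countable simplicial complex of finite dimension,
and `U¹, U², …` a sequence of open covers of the realisation `|K|`, each indexed by `Ω`.
Then there is a locally finite open cover `O = (O_i)_{i ∈ ℕ}` of `|K|` and a function
`φ = (φ₁, φ₂) : ℕ → ℕ × Ω` such that `O_i ⊆ U_{φ(i)}` for each `i`, and whenever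
`O_i ∩ O_j ≠ ∅` with `i ≠ j` one has `φ₁ i ≠ φ₁ j`. -/
theorem covering_lemma {E : Type*} [NormedAddCommGroup E] [NormedSpace ℝ E]
    (K : SimplicialComplex ℝ E)
    (hcount : K.faces.Countable)
    (hfindim : ∃ d : ℕ, ∀ s ∈ K.faces, s.card ≤ d + 1)
    (Ω : Type*) [Uncountable Ω]
    (U : ℕ → Ω → Set K.space)
    (hUopen : ∀ i s, IsOpen (U i s))
    (hUcover : ∀ i : ℕ, (⋃ s : Ω, U i s) = univ) :
    ∃ (O : ℕ → Set K.space) (φ : ℕ → ℕ × Ω),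
      (∀ i, IsOpen (O i)) ∧
      (⋃ i : ℕ, O i) = univ ∧
      LocallyFinite O ∧
      (∀ i, O i ⊆ U (φ i).1 (φ i).2) ∧
      (∀ i j, i ≠ j → (O i ∩ O j).Nonempty → (φ i).1 ≠ (φ j).1) :=
  covering_lemma_general K hcount Ω U hUopen hUcover
end
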